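/- arXiv:2111.12258 — 2 statements merged into one kernel-verified Lean document; each statement's English description precedes it below -/
import Mathlib

section
/- Under the LATE assumptions and EMCO, the average untreated potential outcome for compliers is identified: (E[Y·1(D=0)|Z=1]−E[Y·1(D=0)|Z=0])/(P(D=0|Z=1)−P(D=0|Z=0)) = E[Y(0) | D(1)>D(0)=0], provided P(D(1)>D(0)=0) > 0. -/
/-!
Under independence of the instrument, conditioning on `Z = z` does not change the law of
`(D(0), D(1), Y(0))`. Hence `E[Y·1(D=0) | Z=1] = E[Y(0)·1(D(1)=0)]` and
`E[Y·1(D=0) | Z=0] = E[Y(0)·1(D(0)=0)]`, and likewise for the probabilities of `D = 0`.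
By monotonicity `{D(1) = 0} ⊆ {D(0) = 0}` almost surely, and the difference of the two events is
exactly the set of compliers `{D(0) = 0 < D(1)}`, so the Wald ratio is `E[Y(0) | D(1) > D(0) = 0]`.
-/

open MeasureTheory ProbabilityTheory

variable {Ω : Type*}

/-- probability of a set -/
noncomputable def pr [MeasurableSpace Ω] (μ : MeasureTheory.Measure Ω) (A : Set Ω) : ℝ :=
  (μ A).toReal

/-- conditional probability P(A | B) -/
noncomputable def cP [MeasurableSpace Ω] (μ : MeasureTheory.Measure Ω) (A B : Set Ω) : ℝ :=
  pr μ (A ∩ B) / pr μ B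

/-- conditional expectation E[f | B] -/
noncomputable def cE [MeasurableSpace Ω] (μ : MeasureTheory.Measure Ω) (f : Ω → ℝ) (B : Set Ω) : ℝ :=
  (∫ ω in B, f ω ∂μ) / pr μ B

/-- observed treatment D = Z·D(1) + (1−Z)·D(0) -/
def obsD (Z D0 D1 : Ω → ℕ) : Ω → ℕ := fun ω => if Z ω = 1 then D1 ω else D0 ω

/-- observed outcome Y = Y(D) -/
noncomputable def obsY (Z D0 D1 : Ω → ℕ) (Yp : ℕ → Ω → ℝ) : Ω → ℝ :=
  fun ω => Yp (obsD Z D0 D1 ω) ω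

open Set

section

variable [MeasurableSpace Ω] {μ : Measure Ω}

lemma pr_eq_measureReal (s : Set Ω) : pr μ s = μ.real s := rfl

lemma pr_compl_ne_zero [IsProbabilityMeasure μ] {s : Set Ω} (hs : MeasurableSet s)
    (h : pr μ s < 1) : pr μ sᶜ ≠ 0 := by
  rw [pr_eq_measureReal, probReal_compl_eq_one_sub hs]
  exact (sub_pos.2 h).ne'

lemma cE_congr {f g : Ω → ℝ} {B : Set Ω} (hB : MeasurableSet B) (h : EqOn f g B) :
    cE μ f B = cE μ g B := by
  rw [cE, cE, setIntegral_congr_fun hB h]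

lemma cP_congr {A A' B : Set Ω} (h : A ∩ B = A' ∩ B) : cP μ A B = cP μ A' B := by
  rw [cP, cP, h]

lemma setIntegral_preimage_eq_integral_mul_of_indepFun {β : Type*} [MeasurableSpace β]
    {Y : Ω → ℝ} {Z : Ω → β} {T : Set β} (hYZ : IndepFun Y Z μ) (hY : Integrable Y μ)
    (hZ : Measurable Z) (hT : MeasurableSet T) :
    ∫ ω in Z ⁻¹' T, Y ω ∂μ = (∫ ω, Y ω ∂μ) * pr μ (Z ⁻¹' T) := by
  have hT' : MeasurableSet (Z ⁻¹' T) := hZ hT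
  have hχ : (Z ⁻¹' T).indicator (1 : Ω → ℝ) = T.indicator 1 ∘ Z :=
    funext fun _ => indicator_comp_right (g := (1 : β → ℝ)) Z
  have hind : IndepFun Y ((Z ⁻¹' T).indicator 1) μ :=
    hχ ▸ hYZ.comp measurable_id (measurable_one.indicator hT)
  calc ∫ ω in Z ⁻¹' T, Y ω ∂μ = ∫ ω, Y ω * (Z ⁻¹' T).indicator 1 ω ∂μ := by
        rw [← integral_indicator hT']
        congr 1 with ω
        by_cases hω : ω ∈ Z ⁻¹' T <;> simp [hω]
    _ = (∫ ω, Y ω ∂μ) * pr μ (Z ⁻¹' T) := by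
        rw [hind.integral_fun_mul_eq_mul_integral hY.aestronglyMeasurable
          (aestronglyMeasurable_one.indicator hT'), integral_indicator_one hT', pr_eq_measureReal]

lemma cE_preimage_eq_integral_of_indepFun {β : Type*} [MeasurableSpace β]
    {Y : Ω → ℝ} {Z : Ω → β} {T : Set β} (hYZ : IndepFun Y Z μ) (hY : Integrable Y μ)
    (hZ : Measurable Z) (hT : MeasurableSet T) (hpos : pr μ (Z ⁻¹' T) ≠ 0) :
    cE μ Y (Z ⁻¹' T) = ∫ ω, Y ω ∂μ := by
  rw [cE, setIntegral_preimage_eq_integral_mul_of_indepFun hYZ hY hZ hT,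
    mul_div_cancel_right₀ _ hpos]

lemma cP_preimage_eq_pr_of_indepFun {α β : Type*} [MeasurableSpace α] [MeasurableSpace β]
    {X : Ω → α} {Z : Ω → β} {A : Set α} {T : Set β} (hXZ : IndepFun X Z μ)
    (hA : MeasurableSet A) (hT : MeasurableSet T) (hpos : pr μ (Z ⁻¹' T) ≠ 0) :
    cP μ (X ⁻¹' A) (Z ⁻¹' T) = pr μ (X ⁻¹' A) := by
  rw [cP, pr_eq_measureReal, pr_eq_measureReal, measureReal_def, measureReal_def,
    hXZ.measure_inter_preimage_eq_mul A T hA hT, ENNReal.toReal_mul]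
  exact mul_div_cancel_right₀ _ hpos

lemma setIntegral_sub_setIntegral_of_ae_le {A B : Set Ω} {f : Ω → ℝ} (hA : MeasurableSet A)
    (hB : MeasurableSet B) (hAB : A ≤ᵐ[μ] B) (hf : IntegrableOn f B μ) :
    ∫ ω in B, f ω ∂μ - ∫ ω in A, f ω ∂μ = ∫ ω in B \ A, f ω ∂μ := by
  rw [← setIntegral_congr_set (Filter.inter_eventuallyEq_left.mpr hAB),
    ← sdiff_inter_self_eq_sdiff (s := B) (t := A),
    setIntegral_sdiff (hA.inter hB) hf inter_subset_right]

lemma measureReal_sub_measureReal_of_ae_le [IsFiniteMeasure μ] {A B : Set Ω}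
    (hA : MeasurableSet A) (hB : MeasurableSet B) (hAB : A ≤ᵐ[μ] B) :
    μ.real B - μ.real A = μ.real (B \ A) := by
  simpa using setIntegral_sub_setIntegral_of_ae_le hA hB hAB (integrableOn_const (C := (1 : ℝ)))

lemma setIntegral_sub_div_pr_sub_eq_cE_sdiff [IsFiniteMeasure μ] {A B : Set Ω} {f : Ω → ℝ}
    (hA : MeasurableSet A) (hB : MeasurableSet B) (hAB : A ≤ᵐ[μ] B) (hf : IntegrableOn f B μ) :
    (∫ ω in A, f ω ∂μ - ∫ ω in B, f ω ∂μ) / (pr μ A - pr μ B) = cE μ f (B \ A) := by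
  rw [← neg_sub (∫ ω in B, f ω ∂μ), ← neg_sub (pr μ B), neg_div_neg_eq,
    setIntegral_sub_setIntegral_of_ae_le hA hB hAB hf, pr_eq_measureReal, pr_eq_measureReal,
    measureReal_sub_measureReal_of_ae_le hA hB hAB, cE, pr_eq_measureReal]

lemma cE_indicator_preimage_eq_setIntegral_of_indepFun {α β : Type*} [MeasurableSpace α]
    [MeasurableSpace β] {D : Ω → α} {Y : Ω → ℝ} {Z : Ω → β} {A : Set α} {T : Set β}
    (hind : IndepFun (fun ω => (D ω, Y ω)) Z μ) (hD : Measurable D) (hA : MeasurableSet A)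
    (hY : Integrable Y μ) (hZ : Measurable Z) (hT : MeasurableSet T)
    (hpos : pr μ (Z ⁻¹' T) ≠ 0) :
    cE μ ((D ⁻¹' A).indicator Y) (Z ⁻¹' T) = ∫ ω in D ⁻¹' A, Y ω ∂μ := by
  have hφ : (Prod.fst ⁻¹' A).indicator Prod.snd ∘ (fun ω => (D ω, Y ω)) =
      (D ⁻¹' A).indicator Y := rfl
  have hYZ : IndepFun ((D ⁻¹' A).indicator Y) Z μ :=
    hφ ▸ hind.comp (measurable_snd.indicator (measurable_fst hA)) measurable_id
  rw [cE_preimage_eq_integral_of_indepFun hYZ (hY.indicator (hD hA)) hZ hT hpos,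
    integral_indicator (hD hA)]

end

section

variable {Z D0 D1 : Ω → ℕ}

lemma untreated_obsY_eqOn_of_eq_one (Yp : ℕ → Ω → ℝ) :
    EqOn (fun ω => if obsD Z D0 D1 ω = 0 then obsY Z D0 D1 Yp ω else 0)
      ((D1 ⁻¹' {0}).indicator (Yp 0)) {ω | Z ω = 1} := by
  intro ω (hω : Z ω = 1)
  by_cases hd : D1 ω = 0 <;> simp [obsD, obsY, hω, hd]

lemma untreated_obsY_eqOn_of_eq_zero (Yp : ℕ → Ω → ℝ) :
    EqOn (fun ω => if obsD Z D0 D1 ω = 0 then obsY Z D0 D1 Yp ω else 0)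
      ((D0 ⁻¹' {0}).indicator (Yp 0)) {ω | Z ω = 0} := by
  intro ω (hω : Z ω = 0)
  by_cases hd : D0 ω = 0 <;> simp [obsD, obsY, hω, hd]

lemma setOf_obsD_eq_zero_inter_of_eq_one :
    {ω | obsD Z D0 D1 ω = 0} ∩ {ω | Z ω = 1} = D1 ⁻¹' {0} ∩ {ω | Z ω = 1} := by
  ext ω
  by_cases hω : Z ω = 1 <;> simp [obsD, hω]

lemma setOf_obsD_eq_zero_inter_of_eq_zero :
    {ω | obsD Z D0 D1 ω = 0} ∩ {ω | Z ω = 0} = D0 ⁻¹' {0} ∩ {ω | Z ω = 0} := by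
  ext ω
  by_cases hω : Z ω = 0 <;> simp [obsD, hω]

end

theorem complier_untreated_mean_identified_general
    [MeasurableSpace Ω] (μ : MeasureTheory.Measure Ω) [IsProbabilityMeasure μ]
    (Z D0 D1 : Ω → ℕ) (Yp : ℕ → Ω → ℝ)
    (hZ01 : ∀ ω, Z ω = 0 ∨ Z ω = 1)
    (hZm : Measurable Z) (hD0m : Measurable D0) (hD1m : Measurable D1)
    (hYint : ∀ d, Integrable (Yp d) μ)
    (hindep : IndepFun (fun ω => (D0 ω, D1 ω, fun d => Yp d ω)) Z μ)
    (hmono : ∀ᵐ ω ∂μ, D0 ω ≤ D1 ω)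
    (hZ1pos : 0 < pr μ {ω | Z ω = 1}) (hZ1lt : pr μ {ω | Z ω = 1} < 1) :
    (cE μ (fun ω => if obsD Z D0 D1 ω = 0 then obsY Z D0 D1 Yp ω else 0) {ω | Z ω = 1} -
      cE μ (fun ω => if obsD Z D0 D1 ω = 0 then obsY Z D0 D1 Yp ω else 0) {ω | Z ω = 0}) /
      (cP μ {ω | obsD Z D0 D1 ω = 0} {ω | Z ω = 1} -
        cP μ {ω | obsD Z D0 D1 ω = 0} {ω | Z ω = 0}) =
    cE μ (Yp 0) {ω | D0 ω = 0 ∧ 0 < D1 ω} := by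
  have h0 : MeasurableSet ({0} : Set ℕ) := measurableSet_singleton 0
  have h1 : MeasurableSet ({1} : Set ℕ) := measurableSet_singleton 1
  have hZ0 : MeasurableSet {ω | Z ω = 0} := hZm h0
  have hZ1 : MeasurableSet {ω | Z ω = 1} := hZm h1
  have hpr0 : pr μ {ω | Z ω = 0} ≠ 0 := by
    have hcompl : {ω | Z ω = 0} = {ω | Z ω = 1}ᶜ := by
      ext ω
      rcases hZ01 ω with h | h <;> simp [h]
    exact hcompl ▸ pr_compl_ne_zero hZ1 hZ1lt
  have hind0 : IndepFun (fun ω => (D0 ω, Yp 0 ω)) Z μ :=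
    hindep.comp (φ := fun p => (p.1, p.2.2 0)) (by fun_prop) measurable_id
  have hind1 : IndepFun (fun ω => (D1 ω, Yp 0 ω)) Z μ :=
    hindep.comp (φ := fun p => (p.2.1, p.2.2 0)) (by fun_prop) measurable_id
  have hE0 :
      cE μ ((D0 ⁻¹' {0}).indicator (Yp 0)) {ω | Z ω = 0} = ∫ ω in D0 ⁻¹' {0}, Yp 0 ω ∂μ :=
    cE_indicator_preimage_eq_setIntegral_of_indepFun hind0 hD0m h0 (hYint 0) hZm h0 hpr0
  have hE1 :
      cE μ ((D1 ⁻¹' {0}).indicator (Yp 0)) {ω | Z ω = 1} = ∫ ω in D1 ⁻¹' {0}, Yp 0 ω ∂μ :=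
    cE_indicator_preimage_eq_setIntegral_of_indepFun hind1 hD1m h0 (hYint 0) hZm h1 hZ1pos.ne'
  have hP0 : cP μ (D0 ⁻¹' {0}) {ω | Z ω = 0} = pr μ (D0 ⁻¹' {0}) :=
    cP_preimage_eq_pr_of_indepFun (hind0.comp measurable_fst measurable_id) h0 h0 hpr0
  have hP1 : cP μ (D1 ⁻¹' {0}) {ω | Z ω = 1} = pr μ (D1 ⁻¹' {0}) :=
    cP_preimage_eq_pr_of_indepFun (hind1.comp measurable_fst measurable_id) h0 h1 hZ1pos.ne'
  have hnested : D1 ⁻¹' {0} ≤ᵐ[μ] D0 ⁻¹' {0} := by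
    filter_upwards [hmono] with ω hle (hD1 : D1 ω = 0)
    show D0 ω = 0
    omega
  have hcompliers : {ω | D0 ω = 0 ∧ 0 < D1 ω} = D0 ⁻¹' {0} \ D1 ⁻¹' {0} := by
    ext ω
    simp [Nat.pos_iff_ne_zero]
  rw [cE_congr hZ1 (untreated_obsY_eqOn_of_eq_one Yp),
    cE_congr hZ0 (untreated_obsY_eqOn_of_eq_zero Yp),
    cP_congr setOf_obsD_eq_zero_inter_of_eq_one, cP_congr setOf_obsD_eq_zero_inter_of_eq_zero,
    hE0, hE1, hP0, hP1, hcompliers]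
  exact setIntegral_sub_div_pr_sub_eq_cE_sdiff (hD1m h0) (hD0m h0) hnested (hYint 0).integrableOn

/-- identification of compliers' average untreated potential outcome. -/
theorem complier_untreated_mean_identified
    [MeasurableSpace Ω] (μ : MeasureTheory.Measure Ω) [IsProbabilityMeasure μ]
    (Dbar : ℕ) (Z D0 D1 : Ω → ℕ) (Yp : ℕ → Ω → ℝ)
    (hZ01 : ∀ ω, Z ω = 0 ∨ Z ω = 1)
    (hZm : Measurable Z) (hD0m : Measurable D0) (hD1m : Measurable D1)
    (hD0b : ∀ ω, D0 ω ≤ Dbar) (hD1b : ∀ ω, D1 ω ≤ Dbar)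
    (hYm : ∀ d, Measurable (Yp d)) (hYint : ∀ d, Integrable (Yp d) μ)
    (hindep : IndepFun (fun ω => (D0 ω, D1 ω, fun d => Yp d ω)) Z μ)
    (hmono : ∀ᵐ ω ∂μ, D0 ω ≤ D1 ω)
    (hemco : ∀ᵐ ω ∂μ, D0 ω < D1 ω → D0 ω = 0)
    (hZ1pos : 0 < pr μ {ω | Z ω = 1}) (hZ1lt : pr μ {ω | Z ω = 1} < 1)
    (hcomp : 0 < pr μ {ω | D0 ω = 0 ∧ 0 < D1 ω}) :
    (cE μ (fun ω => if obsD Z D0 D1 ω = 0 then obsY Z D0 D1 Yp ω else 0) {ω | Z ω = 1} -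
      cE μ (fun ω => if obsD Z D0 D1 ω = 0 then obsY Z D0 D1 Yp ω else 0) {ω | Z ω = 0}) /
      (cP μ {ω | obsD Z D0 D1 ω = 0} {ω | Z ω = 1} -
        cP μ {ω | obsD Z D0 D1 ω = 0} {ω | Z ω = 0}) =
    cE μ (Yp 0) {ω | D0 ω = 0 ∧ 0 < D1 ω} :=
  complier_untreated_mean_identified_general μ Z D0 D1 Yp hZ01 hZm hD0m hD1m hYint hindep hmono
    hZ1pos hZ1lt
end

section
/- Under the LATE assumptions (Angrist-Imbens ACR theorem for ordered treatments), the Wald estimand equals the average causal response: (E[Y|Z=1]−E[Y|Z=0])/(E[D|Z=1]−E[D|Z=0]) = Σ_{d=1}^{D̄} ω_d · E[Y(d)−Y(d−1) | D(1) ≥ d > D(0)], where ω_d = P(D(1)≥d>D(0)) / Σ_{k=1}^{D̄} P(D(1)≥k>D(0)). -/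
/-
Independence of Z from (D(0), D(1), Y(·)) turns the observed means given Z = z into the
unconditional means E[Y(D(z))] and E[D(z)]. Since D(0) ≤ D(1) ≤ D̄, both differences
telescope: Y(D(1)) − Y(D(0)) = Σ_{d=1}^{D̄} 1{D(0) < d ≤ D(1)} (Y(d) − Y(d−1)) and
D(1) − D(0) = Σ_{d=1}^{D̄} 1{D(0) < d ≤ D(1)}. Integrating, the Wald numerator is
Σ_d P(A_d) E[Y(d) − Y(d−1) | A_d] and the denominator Σ_d P(A_d), with A_d = {D(1) ≥ d > D(0)}.
-/

open MeasureTheory ProbabilityTheory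

variable {Ω : Type*}

open Finset

lemma Finset.sum_Ioc_sub_pred {M : Type*} [AddCommGroup M] (F : ℕ → M) {a b : ℕ} (hab : a ≤ b) :
    ∑ d ∈ Ioc a b, (F d - F (d - 1)) = F b - F a := by
  induction b, hab using Nat.le_induction with
  | base => simp
  | succ n hn ih => rw [sum_Ioc_succ_top hn, ih, Nat.add_sub_cancel]; abel

lemma sub_eq_sum_Icc_ite {M : Type*} [AddCommGroup M] (F : ℕ → M) {a b N : ℕ}
    (hab : a ≤ b) (hbN : b ≤ N) :
    F b - F a = ∑ d ∈ Icc 1 N, if d ≤ b ∧ a < d then F d - F (d - 1) else 0 := by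
  rw [← sum_filter, ← sum_Ioc_sub_pred F hab]
  congr 1
  ext d
  simp only [mem_filter, mem_Icc, mem_Ioc]
  omega

lemma Measurable.apply_of_countable {α ι β : Type*} [MeasurableSpace α] [MeasurableSpace ι]
    [Countable ι] [MeasurableSingletonClass ι] [MeasurableSpace β] {f : α → ι → β} {i : α → ι}
    (hf : Measurable f) (hi : Measurable i) : Measurable fun a => f a (i a) :=
  (measurable_from_prod_countable_left (f := fun p : (ι → β) × ι => p.1 p.2)
    fun j => measurable_pi_apply j).comp (hf.prodMk hi)

section

variable {E : Type*} [MeasurableSpace Ω] {μ : Measure Ω} [NormedAddCommGroup E]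

lemma integrable_apply_of_le {X : Ω → ℕ} {Y : ℕ → Ω → E} {N : ℕ} (hX : Measurable X)
    (hXN : ∀ ω, X ω ≤ N) (hY : ∀ d, Integrable (Y d) μ) :
    Integrable (fun ω => Y (X ω) ω) μ := by
  have hsum : (fun ω => Y (X ω) ω) = ∑ d ∈ range (N + 1), (X ⁻¹' {d}).indicator (Y d) := by
    ext ω
    rw [Finset.sum_apply, sum_eq_single_of_mem (X ω) (mem_range.2 (Nat.lt_succ_of_le (hXN ω)))]
    · simp
    · intro d _ hd
      simp [Ne.symm hd]
  rw [hsum]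
  exact integrable_finsetSum' _ fun d _ => (hY d).indicator (hX (measurableSet_singleton d))

lemma integral_sub_eq_sum_setIntegral [NormedSpace ℝ E] {D0 D1 : Ω → ℕ} {Y : ℕ → Ω → E} {N : ℕ}
    (hD0 : Measurable D0) (hD1 : Measurable D1) (hD0N : ∀ ω, D0 ω ≤ N) (hD1N : ∀ ω, D1 ω ≤ N)
    (hmono : ∀ᵐ ω ∂μ, D0 ω ≤ D1 ω) (hY : ∀ d, Integrable (Y d) μ) :
    ∫ ω, Y (D1 ω) ω ∂μ - ∫ ω, Y (D0 ω) ω ∂μ =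
      ∑ d ∈ Icc 1 N, ∫ ω in {ω | d ≤ D1 ω ∧ D0 ω < d}, (Y d ω - Y (d - 1) ω) ∂μ := by
  set A : ℕ → Set Ω := fun d => {ω | d ≤ D1 ω ∧ D0 ω < d}
  have hA (d : ℕ) : MeasurableSet (A d) := (hD1 measurableSet_Ici).inter (hD0 measurableSet_Iio)
  calc ∫ ω, Y (D1 ω) ω ∂μ - ∫ ω, Y (D0 ω) ω ∂μ
      = ∫ ω, ∑ d ∈ Icc 1 N, (A d).indicator (fun ω => Y d ω - Y (d - 1) ω) ω ∂μ := by
        rw [← integral_sub (integrable_apply_of_le hD1 hD1N hY)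
          (integrable_apply_of_le hD0 hD0N hY)]
        refine integral_congr_ae ?_
        filter_upwards [hmono] with ω hω
        rw [sub_eq_sum_Icc_ite (fun d => Y d ω) hω (hD1N ω)]
        simp [A, Set.indicator_apply]
    _ = _ :=
        (integral_finsetSum _ fun d _ => ((hY d).sub (hY (d - 1))).indicator (hA d)).trans
          (sum_congr rfl fun d _ => integral_indicator (hA d))

lemma integral_natCast_sub_eq_sum_pr [IsFiniteMeasure μ] {D0 D1 : Ω → ℕ} {N : ℕ}
    (hD0 : Measurable D0) (hD1 : Measurable D1) (hD0N : ∀ ω, D0 ω ≤ N) (hD1N : ∀ ω, D1 ω ≤ N)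
    (hmono : ∀ᵐ ω ∂μ, D0 ω ≤ D1 ω) :
    ∫ ω, (D1 ω : ℝ) ∂μ - ∫ ω, (D0 ω : ℝ) ∂μ = ∑ d ∈ Icc 1 N, pr μ {ω | d ≤ D1 ω ∧ D0 ω < d} := by
  rw [integral_sub_eq_sum_setIntegral (Y := fun d _ => (d : ℝ)) hD0 hD1 hD0N hD1N hmono
    fun d => integrable_const _]
  refine sum_congr rfl fun d hd => ?_
  rw [Nat.cast_sub (mem_Icc.1 hd).1, sub_sub_cancel, Nat.cast_one, setIntegral_const, smul_eq_mul,
    mul_one, measureReal_def, pr]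

end

section

variable {β γ : Type*} [MeasurableSpace Ω] [MeasurableSpace β] [MeasurableSpace γ]
  {μ : Measure Ω}

lemma pr_setOf_eq_zero_eq_one_sub [IsProbabilityMeasure μ] {Z : Ω → ℕ} (hZ : Measurable Z)
    (hZ01 : ∀ ω, Z ω = 0 ∨ Z ω = 1) : pr μ {ω | Z ω = 0} = 1 - pr μ {ω | Z ω = 1} := by
  have hcompl : {ω | Z ω = 0} = {ω | Z ω = 1}ᶜ := by
    ext ω
    rcases hZ01 ω with h | h <;> simp [h]
  rw [hcompl]
  exact probReal_compl_eq_one_sub (hZ (measurableSet_singleton 1))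

-- `cE μ f A = 0` when `A` is null, and so is the set integral.
lemma pr_mul_cE [IsFiniteMeasure μ] (f : Ω → ℝ) (A : Set Ω) :
    pr μ A * cE μ f A = ∫ ω in A, f ω ∂μ := by
  rcases eq_or_ne (pr μ A) 0 with h | h
  · have hA : μ A = 0 := (measureReal_eq_zero_iff (measure_ne_top μ A)).1 h
    simp [h, Measure.restrict_eq_zero.2 hA]
  · exact mul_div_cancel₀ _ h

lemma ProbabilityTheory.IndepFun.setIntegral_preimage {W : Ω → β} {Z : Ω → γ}
    (hWZ : IndepFun W Z μ) (hW : Measurable W) (hZ : Measurable Z) {g : β → ℝ} (hg : Measurable g)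
    {s : Set γ} (hs : MeasurableSet s) :
    ∫ ω in Z ⁻¹' s, g (W ω) ∂μ = (∫ ω, g (W ω) ∂μ) * pr μ (Z ⁻¹' s) := by
  have hind : IndepFun (fun ω => g (W ω)) (fun ω => s.indicator (1 : γ → ℝ) (Z ω)) μ :=
    hWZ.comp hg (measurable_one.indicator hs)
  calc ∫ ω in Z ⁻¹' s, g (W ω) ∂μ = ∫ ω, g (W ω) * s.indicator 1 (Z ω) ∂μ := by
        rw [← integral_indicator (hZ hs)]
        congr 1
        ext ω
        by_cases hω : Z ω ∈ s <;> simp [hω]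
    _ = (∫ ω, g (W ω) ∂μ) * ∫ ω, s.indicator 1 (Z ω) ∂μ :=
        hind.integral_fun_mul_eq_mul_integral (hg.comp hW).aestronglyMeasurable
          ((measurable_one.indicator hs).comp hZ).aestronglyMeasurable
    _ = (∫ ω, g (W ω) ∂μ) * pr μ (Z ⁻¹' s) := by
        rw [pr, ← measureReal_def, ← integral_indicator_one (hZ hs)]
        rfl

lemma ProbabilityTheory.IndepFun.cE_preimage_eq_integral {W : Ω → β} {Z : Ω → γ}
    (hWZ : IndepFun W Z μ) (hW : Measurable W) (hZ : Measurable Z) {g : β → ℝ} (hg : Measurable g)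
    {s : Set γ} (hs : MeasurableSet s) (hZs : pr μ (Z ⁻¹' s) ≠ 0) {f : Ω → ℝ}
    (hf : ∀ ω ∈ Z ⁻¹' s, f ω = g (W ω)) :
    cE μ f (Z ⁻¹' s) = ∫ ω, g (W ω) ∂μ := by
  rw [cE, setIntegral_congr_fun (hZ hs) hf, hWZ.setIntegral_preimage hW hZ hg hs,
    mul_div_cancel_right₀ _ hZs]

end

theorem wald_equals_acr_general
    [MeasurableSpace Ω] (μ : MeasureTheory.Measure Ω) [IsProbabilityMeasure μ]
    (Dbar : ℕ) (Z D0 D1 : Ω → ℕ) (Yp : ℕ → Ω → ℝ)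
    (hZ01 : ∀ ω, Z ω = 0 ∨ Z ω = 1)
    (hZm : Measurable Z) (hD0m : Measurable D0) (hD1m : Measurable D1)
    (hD0b : ∀ ω, D0 ω ≤ Dbar) (hD1b : ∀ ω, D1 ω ≤ Dbar)
    (hYm : ∀ d, Measurable (Yp d)) (hYint : ∀ d, Integrable (Yp d) μ)
    (hindep : IndepFun (fun ω => (D0 ω, D1 ω, fun d => Yp d ω)) Z μ)
    (hmono : ∀ᵐ ω ∂μ, D0 ω ≤ D1 ω)
    (hZ1pos : 0 < pr μ {ω | Z ω = 1}) (hZ1lt : pr μ {ω | Z ω = 1} < 1) :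
    (cE μ (obsY Z D0 D1 Yp) {ω | Z ω = 1} - cE μ (obsY Z D0 D1 Yp) {ω | Z ω = 0}) /
      (cE μ (fun ω => (obsD Z D0 D1 ω : ℝ)) {ω | Z ω = 1} -
        cE μ (fun ω => (obsD Z D0 D1 ω : ℝ)) {ω | Z ω = 0}) =
    ∑ d ∈ Finset.Icc 1 Dbar,
      (pr μ {ω | d ≤ D1 ω ∧ D0 ω < d} /
          ∑ k ∈ Finset.Icc 1 Dbar, pr μ {ω | k ≤ D1 ω ∧ D0 ω < k}) *
        cE μ (fun ω => Yp d ω - Yp (d - 1) ω) {ω | d ≤ D1 ω ∧ D0 ω < d} := by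
  have hW : Measurable fun ω => (D0 ω, D1 ω, fun d => Yp d ω) :=
    hD0m.prodMk (hD1m.prodMk (measurable_pi_lambda _ hYm))
  have hZ1 : pr μ {ω | Z ω = 1} ≠ 0 := hZ1pos.ne'
  have hZ0 : pr μ {ω | Z ω = 0} ≠ 0 := by
    rw [pr_setOf_eq_zero_eq_one_sub hZm hZ01]
    exact sub_ne_zero.2 hZ1lt.ne'
  have hEY1 : cE μ (obsY Z D0 D1 Yp) {ω | Z ω = 1} = ∫ ω, Yp (D1 ω) ω ∂μ :=
    hindep.cE_preimage_eq_integral (g := fun p => p.2.2 p.2.1) hW hZm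
      (Measurable.apply_of_countable (by fun_prop) (by fun_prop)) (measurableSet_singleton 1) hZ1
      fun ω hω => by simp_all [obsY, obsD]
  have hEY0 : cE μ (obsY Z D0 D1 Yp) {ω | Z ω = 0} = ∫ ω, Yp (D0 ω) ω ∂μ :=
    hindep.cE_preimage_eq_integral (g := fun p => p.2.2 p.1) hW hZm
      (Measurable.apply_of_countable (by fun_prop) (by fun_prop)) (measurableSet_singleton 0) hZ0
      fun ω hω => by simp_all [obsY, obsD]
  have hED1 : cE μ (fun ω => (obsD Z D0 D1 ω : ℝ)) {ω | Z ω = 1} = ∫ ω, (D1 ω : ℝ) ∂μ :=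
    hindep.cE_preimage_eq_integral (g := fun p => (p.2.1 : ℝ)) hW hZm
      (by fun_prop) (measurableSet_singleton 1) hZ1 fun ω hω => by simp_all [obsD]
  have hED0 : cE μ (fun ω => (obsD Z D0 D1 ω : ℝ)) {ω | Z ω = 0} = ∫ ω, (D0 ω : ℝ) ∂μ :=
    hindep.cE_preimage_eq_integral (g := fun p => (p.1 : ℝ)) hW hZm
      (by fun_prop) (measurableSet_singleton 0) hZ0 fun ω hω => by simp_all [obsD]
  rw [hEY1, hEY0, hED1, hED0, integral_sub_eq_sum_setIntegral hD0m hD1m hD0b hD1b hmono hYint,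
    integral_natCast_sub_eq_sum_pr hD0m hD1m hD0b hD1b hmono, Finset.sum_div]
  refine Finset.sum_congr rfl fun d _ => ?_
  rw [div_mul_eq_mul_div, pr_mul_cE]

/-- Angrist–Imbens average causal response theorem. -/
theorem wald_equals_acr
    [MeasurableSpace Ω] (μ : MeasureTheory.Measure Ω) [IsProbabilityMeasure μ]
    (Dbar : ℕ) (Z D0 D1 : Ω → ℕ) (Yp : ℕ → Ω → ℝ)
    (hZ01 : ∀ ω, Z ω = 0 ∨ Z ω = 1)
    (hZm : Measurable Z) (hD0m : Measurable D0) (hD1m : Measurable D1)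
    (hD0b : ∀ ω, D0 ω ≤ Dbar) (hD1b : ∀ ω, D1 ω ≤ Dbar)
    (hYm : ∀ d, Measurable (Yp d)) (hYint : ∀ d, Integrable (Yp d) μ)
    (hindep : IndepFun (fun ω => (D0 ω, D1 ω, fun d => Yp d ω)) Z μ)
    (hmono : ∀ᵐ ω ∂μ, D0 ω ≤ D1 ω)
    (hrel : cE μ (fun ω => (obsD Z D0 D1 ω : ℝ)) {ω | Z ω = 1} >
            cE μ (fun ω => (obsD Z D0 D1 ω : ℝ)) {ω | Z ω = 0})
    (hZ1pos : 0 < pr μ {ω | Z ω = 1}) (hZ1lt : pr μ {ω | Z ω = 1} < 1) :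
    (cE μ (obsY Z D0 D1 Yp) {ω | Z ω = 1} - cE μ (obsY Z D0 D1 Yp) {ω | Z ω = 0}) /
      (cE μ (fun ω => (obsD Z D0 D1 ω : ℝ)) {ω | Z ω = 1} -
        cE μ (fun ω => (obsD Z D0 D1 ω : ℝ)) {ω | Z ω = 0}) =
    ∑ d ∈ Finset.Icc 1 Dbar,
      (pr μ {ω | d ≤ D1 ω ∧ D0 ω < d} /
          ∑ k ∈ Finset.Icc 1 Dbar, pr μ {ω | k ≤ D1 ω ∧ D0 ω < k}) *
        cE μ (fun ω => Yp d ω - Yp (d - 1) ω) {ω | d ≤ D1 ω ∧ D0 ω < d} :=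
  wald_equals_acr_general μ Dbar Z D0 D1 Yp hZ01 hZm hD0m hD1m hD0b hD1b hYm hYint hindep hmono
    hZ1pos hZ1lt
end
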